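/- arXiv:1812.10248 — 7 statements merged into one kernel-verified Lean document; each statement's English description precedes it below -/
import Mathlib

section
/- Let ψ: B_N → ℂ and φ = (φ_1,…,φ_N): B_N → B_N be holomorphic with ψ(0) ≠ 0, and suppose the identity (★) holds: ψ(z)·(1 − log(1 − Σ_j φ_j(z)·w_j)) = ψ(w)·(1 − log(1 − Σ_j z_j·φ_j(w))) for all z,w ∈ B_N. Then for every z ∈ B_N one has ψ(z) = ψ(0)·(1 − log(1 − Σ_k z_k·φ_k(0))), and for every k = 1,…,N one has φ_k(z) = φ_k(0) + (Σ_j (∂φ_j/∂z_k)(0)·z_j) / ((1 − Σ_m z_m·φ_m(0))·(1 − log(1 − Σ_m z_m·φ_m(0)))). -/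
open ComplexConjugate

/-- The open unit ball of `ℂ^N` (Euclidean norm). -/
def unitBall (N : ℕ) : Set (Fin N → ℂ) := {z | ∑ j, ‖z j‖ ^ 2 < 1}

/-- The Jacobian matrix `φ'(0)`, with `(i, j)` entry `(∂φ_i/∂z_j)(0)`. -/
noncomputable def jac0 (N : ℕ) (φ : (Fin N → ℂ) → Fin N → ℂ) :
    Matrix (Fin N) (Fin N) ℂ :=
  Matrix.of fun i j => fderiv ℂ φ 0 (Pi.single j 1) i

/-!
Putting `w = 0` in the identity gives the formula for `ψ`. Differentiating the identity in `w`
at `w = 0` in the direction `e_k`, the left side gives `ψ(z) φ_k(z)`; on the right side `ψ(w)`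
is now explicit, and the product rule gives `ψ(0)` times
`φ_k(0) (1 - log(1 - ⟨z, φ(0)⟩)) + (φ'(0)ᵀ z)_k / (1 - ⟨z, φ(0)⟩)`.
Substituting the formula for `ψ(z)` and dividing by `ψ(0) ≠ 0` gives the formula for `φ_k`.
-/

open Filter Topology

lemma isOpen_unitBall (N : ℕ) : IsOpen (unitBall N) :=
  isOpen_lt (by fun_prop) continuous_const

lemma zero_mem_unitBall (N : ℕ) : (0 : Fin N → ℂ) ∈ unitBall N := by
  simp [unitBall]

lemma norm_sum_mul_lt_one {N : ℕ} {z w : Fin N → ℂ} (hz : z ∈ unitBall N)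
    (hw : w ∈ unitBall N) : ‖∑ j, z j * w j‖ < 1 := by
  have hle : ‖∑ j, z j * w j‖ ≤ ∑ j, ‖z j‖ * ‖w j‖ :=
    (norm_sum_le _ _).trans_eq (by simp only [norm_mul])
  have hcs : (∑ j, ‖z j‖ * ‖w j‖) ^ 2 ≤ (∑ j, ‖z j‖ ^ 2) * ∑ j, ‖w j‖ ^ 2 :=
    Finset.sum_mul_sq_le_sq_mul_sq _ _ _
  have hz' : ∑ j, ‖z j‖ ^ 2 < 1 := hz
  have hw' : ∑ j, ‖w j‖ ^ 2 < 1 := hw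
  have hw0 : 0 ≤ ∑ j, ‖w j‖ ^ 2 := by positivity
  have hsq : (∑ j, ‖z j‖ * ‖w j‖) ^ 2 < 1 := by nlinarith
  nlinarith [norm_nonneg (∑ j, z j * w j)]

lemma Complex.one_sub_mem_slitPlane {s : ℂ} (hs : ‖s‖ < 1) : 1 - s ∈ Complex.slitPlane := by
  simpa [sub_eq_add_neg] using Complex.mem_slitPlane_of_norm_lt_one (z := -s) (by simpa)

lemma Complex.one_sub_log_one_sub_ne_zero {s : ℂ} (hs : ‖s‖ < 1) :
    1 - Complex.log (1 - s) ≠ 0 := by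
  intro h
  have hexp : 1 - s = Complex.exp 1 := by
    rw [← Complex.exp_log (Complex.slitPlane_ne_zero (Complex.one_sub_mem_slitPlane hs)),
      ← sub_eq_zero.mp h]
  have hnorm : ‖(1 : ℂ) - s‖ < 2 :=
    calc ‖(1 : ℂ) - s‖ ≤ ‖(1 : ℂ)‖ + ‖s‖ := norm_sub_le _ _
      _ < 2 := by rw [norm_one]; linarith
  rw [hexp, Complex.norm_exp, Complex.one_re] at hnorm
  linarith [Real.exp_one_gt_d9]

lemma HasDerivAt.one_sub_log_one_sub {f : ℂ → ℂ} {f' x : ℂ} (hf : HasDerivAt f f' x)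
    (hx : 1 - f x ∈ Complex.slitPlane) :
    HasDerivAt (fun t => 1 - Complex.log (1 - f t)) (f' / (1 - f x)) x := by
  simpa [neg_div] using ((hf.const_sub 1).clog hx).const_sub 1

lemma hasDerivAt_comp_smul_single {N : ℕ} {φ : (Fin N → ℂ) → Fin N → ℂ}
    (hφ : DifferentiableAt ℂ φ 0) (k : Fin N) :
    HasDerivAt (fun t : ℂ => φ (t • Pi.single k 1)) (fun j => jac0 N φ j k) 0 := by
  have hline : HasDerivAt (fun t : ℂ => t • (Pi.single k 1 : Fin N → ℂ)) (Pi.single k 1) 0 := by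
    simpa using (hasDerivAt_id (0 : ℂ)).smul_const (Pi.single k (1 : ℂ) : Fin N → ℂ)
  exact hφ.hasFDerivAt.comp_hasDerivAt_of_eq (0 : ℂ) hline (by simp)

/-- Identity (★), `W_{ψ,φ} J K_w = J W_{ψ,φ}^* K_w`, evaluated at `z`; the conjugation `J` turns
the Hermitian product in `K_w(z) = 1 - log (1 - ⟨z, w⟩)` into the bilinear pairing. -/
def KernelIdentity (N : ℕ) (ψ : (Fin N → ℂ) → ℂ) (φ : (Fin N → ℂ) → Fin N → ℂ) : Prop :=
  ∀ z ∈ unitBall N, ∀ w ∈ unitBall N,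
    ψ z * (1 - Complex.log (1 - ∑ j, φ z j * w j)) =
      ψ w * (1 - Complex.log (1 - ∑ j, z j * φ w j))

namespace KernelIdentity

variable {N : ℕ} {ψ : (Fin N → ℂ) → ℂ} {φ : (Fin N → ℂ) → Fin N → ℂ}

lemma weight_eq (hstar : KernelIdentity N ψ φ) {z : Fin N → ℂ} (hz : z ∈ unitBall N) :
    ψ z = ψ 0 * (1 - Complex.log (1 - ∑ k, z k * φ 0 k)) := by
  simpa using hstar z hz 0 (zero_mem_unitBall N)

lemma weight_mul_eq (hstar : KernelIdentity N ψ φ) (hφ : DifferentiableAt ℂ φ 0)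
    (hφ0 : φ 0 ∈ unitBall N) (k : Fin N) {z : Fin N → ℂ} (hz : z ∈ unitBall N) :
    ψ z * φ z k = ψ 0 * (φ 0 k * (1 - Complex.log (1 - ∑ m, z m * φ 0 m)) +
      (∑ j, z j * jac0 N φ j k) / (1 - ∑ m, z m * φ 0 m)) := by
  have hslit := Complex.one_sub_mem_slitPlane (norm_sum_mul_lt_one hz hφ0)
  have hlhs : HasDerivAt (fun t : ℂ => ψ z * (1 - Complex.log (1 - φ z k * t)))
      (ψ z * φ z k) 0 := by
    simpa using (((hasDerivAt_id (0 : ℂ)).const_mul (φ z k)).one_sub_log_one_sub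
      (by simp)).const_mul (ψ z)
  have hrhs : HasDerivAt (fun t : ℂ => ψ 0 * (1 - Complex.log (1 - t * φ 0 k)) *
      (1 - Complex.log (1 - ∑ j, z j * φ (t • Pi.single k 1) j)))
      (ψ 0 * (φ 0 k * (1 - Complex.log (1 - ∑ m, z m * φ 0 m)) +
        (∑ j, z j * jac0 N φ j k) / (1 - ∑ m, z m * φ 0 m))) 0 := by
    have hψ : HasDerivAt (fun t : ℂ => ψ 0 * (1 - Complex.log (1 - t * φ 0 k)))
        (ψ 0 * φ 0 k) 0 := by
      simpa using (((hasDerivAt_id (0 : ℂ)).mul_const (φ 0 k)).one_sub_log_one_sub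
        (by simp)).const_mul (ψ 0)
    have hsum : HasDerivAt (fun t : ℂ => ∑ j, z j * φ (t • Pi.single k 1) j)
        (∑ j, z j * jac0 N φ j k) 0 :=
      HasDerivAt.fun_sum fun j _ =>
        (hasDerivAt_pi.mp (hasDerivAt_comp_smul_single hφ k) j).const_mul (z j)
    refine (hψ.fun_mul (hsum.one_sub_log_one_sub (by simpa using hslit))).congr_deriv ?_
    simp
    ring
  have hline : ∀ᶠ t : ℂ in 𝓝 0, t • (Pi.single k 1 : Fin N → ℂ) ∈ unitBall N :=
    (continuous_id.smul continuous_const).continuousAt.preimage_mem_nhds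
      ((isOpen_unitBall N).mem_nhds (by simpa using zero_mem_unitBall N))
  refine hlhs.unique (hrhs.congr_of_eventuallyEq ?_)
  filter_upwards [hline] with t ht
  have := hstar z hz _ ht
  rw [hstar.weight_eq ht] at this
  simpa [Pi.single_apply, mul_comm] using this

end KernelIdentity

theorem stmt_0_general (N : ℕ)
    (ψ : (Fin N → ℂ) → ℂ) (φ : (Fin N → ℂ) → Fin N → ℂ)
    (hφ : DifferentiableOn ℂ φ (unitBall N))
    (hmap : ∀ z ∈ unitBall N, φ z ∈ unitBall N)
    (hψ0 : ψ 0 ≠ 0)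
    (hstar : ∀ z ∈ unitBall N, ∀ w ∈ unitBall N,
      ψ z * (1 - Complex.log (1 - ∑ j, φ z j * w j)) =
        ψ w * (1 - Complex.log (1 - ∑ j, z j * φ w j))) :
    (∀ z ∈ unitBall N,
        ψ z = ψ 0 * (1 - Complex.log (1 - ∑ k, z k * φ 0 k))) ∧
      ∀ k : Fin N, ∀ z ∈ unitBall N,
        φ z k = φ 0 k +
          (∑ j, jac0 N φ j k * z j) /
            ((1 - ∑ m, z m * φ 0 m) *
              (1 - Complex.log (1 - ∑ m, z m * φ 0 m))) := by
  refine ⟨fun z hz => KernelIdentity.weight_eq hstar hz, fun k z hz => ?_⟩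
  have h0 := zero_mem_unitBall N
  have hsz := norm_sum_mul_lt_one hz (hmap 0 h0)
  have hA := Complex.slitPlane_ne_zero (Complex.one_sub_mem_slitPlane hsz)
  have hB := Complex.one_sub_log_one_sub_ne_zero hsz
  have hkey := KernelIdentity.weight_mul_eq hstar
    (hφ.differentiableAt ((isOpen_unitBall N).mem_nhds h0)) (hmap 0 h0) k hz
  rw [KernelIdentity.weight_eq hstar hz, mul_assoc] at hkey
  have hφz := mul_left_cancel₀ hψ0 hkey
  simp only [mul_comm (jac0 N φ _ k)]
  field_simp at hφz ⊢
  linear_combination hφz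

theorem stmt_0 (N : ℕ) (hN : 1 ≤ N)
    (ψ : (Fin N → ℂ) → ℂ) (φ : (Fin N → ℂ) → Fin N → ℂ)
    (hψ : DifferentiableOn ℂ ψ (unitBall N))
    (hφ : DifferentiableOn ℂ φ (unitBall N))
    (hmap : ∀ z ∈ unitBall N, φ z ∈ unitBall N)
    (hψ0 : ψ 0 ≠ 0)
    (hstar : ∀ z ∈ unitBall N, ∀ w ∈ unitBall N,
      ψ z * (1 - Complex.log (1 - ∑ j, φ z j * w j)) =
        ψ w * (1 - Complex.log (1 - ∑ j, z j * φ w j))) :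
    (∀ z ∈ unitBall N,
        ψ z = ψ 0 * (1 - Complex.log (1 - ∑ k, z k * φ 0 k))) ∧
      ∀ k : Fin N, ∀ z ∈ unitBall N,
        φ z k = φ 0 k +
          (∑ j, jac0 N φ j k * z j) /
            ((1 - ∑ m, z m * φ 0 m) *
              (1 - Complex.log (1 - ∑ m, z m * φ 0 m))) :=
  stmt_0_general N ψ φ hφ hmap hψ0 hstar
end

section
/- Let U be a symmetric unitary N×N complex matrix (Uᵀ = U and U·conj(U) = I_N), let c ∈ ℂ, and let M be a symmetric N×N complex matrix such that the map φ(z) = M·(Ū z) sends B_N into B_N, where Ū = conj(U) entrywise. Define ψ(z) = c. Then for all z,w ∈ B_N: ψ(z)·(1 − log(1 − Σ_j (Ū·φ(z))_j·w_j)) = ψ(w)·(1 − log(1 − Σ_j (Ū·z)_j·φ_j(w))). -/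
open ComplexConjugate

theorem stmt_7 (N : ℕ) (hN : 1 ≤ N) (c : ℂ)
    (U M : Matrix (Fin N) (Fin N) ℂ)
    (hUsymm : U.transpose = U)
    (hUunit : U * U.map (starRingEnd ℂ) = 1)
    (hMsymm : M.transpose = M)
    (hmap : ∀ z ∈ unitBall N,
      M.mulVec ((U.map (starRingEnd ℂ)).mulVec z) ∈ unitBall N) :
    ∀ z ∈ unitBall N, ∀ w ∈ unitBall N,
      c * (1 - Complex.log (1 -
          ∑ j, (U.map (starRingEnd ℂ)).mulVec
              (M.mulVec ((U.map (starRingEnd ℂ)).mulVec z)) j * w j)) =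
        c * (1 - Complex.log (1 -
          ∑ j, (U.map (starRingEnd ℂ)).mulVec z j *
              M.mulVec ((U.map (starRingEnd ℂ)).mulVec w) j)) := by
  intro z hz w hw
  set V := U.map (starRingEnd ℂ) with hV
  have hVsymm : V.transpose = V := by
    rw [hV, ← Matrix.transpose_map, hUsymm]
  have key : (∑ j, V.mulVec (M.mulVec (V.mulVec z)) j * w j)
      = ∑ j, V.mulVec z j * M.mulVec (V.mulVec w) j := by
    have h1 : (∑ j, V.mulVec (M.mulVec (V.mulVec z)) j * w j)
        = dotProduct ((V * M * V).mulVec z) w := by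
      simp [dotProduct, Matrix.mulVec_mulVec, Matrix.mul_assoc]
    have h2 : (∑ j, V.mulVec z j * M.mulVec (V.mulVec w) j)
        = dotProduct (V.mulVec z) ((M * V).mulVec w) := by
      simp [dotProduct, Matrix.mulVec_mulVec]
    rw [h1, h2]
    rw [Matrix.dotProduct_mulVec, ← Matrix.mulVec_transpose,
      Matrix.mulVec_mulVec, Matrix.transpose_mul, hVsymm, hMsymm]
  rw [key]
end

section
/- Let A be a symmetric N×N complex matrix (Aᵀ = A) and let a₀ ∈ ℂ^N with |a₀| < 1. Let J' be the (N+1)×(N+1) matrix which is block diagonal with blocks I_N and −1, and let M be the (N+1)×(N+1) block matrix whose top-left N×N block is −A, whose top-right N×1 block is the column a₀, whose bottom-left 1×N block is the row −a₀ᵀ (entries −(a₀)_j, not conjugated), and whose bottom-right entry is 1. Then there exists k ∈ ℂ with k ≠ 0 and |k|²·(Mᴴ·J'·M) = J' (Mᴴ the conjugate transpose) if and only if Ā·A − ā₀·a₀ᵀ = (1 − |a₀|²)·I_N and A·ā₀ = a₀, where Ā and ā₀ denote entrywise complex conjugates and ā₀·a₀ᵀ is the N×N matrix with (i,j) entry conj((a₀)_i)·(a₀)_j.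 -/
open ComplexConjugate

/-- The matrix associated with the linear fractional map
`φ(z) = (a₀ − Az)/(1 − ⟨z, ā₀⟩)`: block matrix with top-left `−A`,
top-right column `a₀`, bottom-left row `−a₀ᵀ`, bottom-right entry `1`. -/
def assocMat (N : ℕ) (A : Matrix (Fin N) (Fin N) ℂ) (a₀ : Fin N → ℂ) :
    Matrix (Fin N ⊕ Unit) (Fin N ⊕ Unit) ℂ :=
  Matrix.fromBlocks (-A) (Matrix.of fun i (_ : Unit) => a₀ i)
    (Matrix.of fun (_ : Unit) j => -(a₀ j))
    (Matrix.of fun (_ : Unit) (_ : Unit) => (1 : ℂ))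

/-- The Kreĭn-space signature matrix `J' = diag(I_N, −1)`. -/
def Jmat (N : ℕ) : Matrix (Fin N ⊕ Unit) (Fin N ⊕ Unit) ℂ :=
  Matrix.fromBlocks (1 : Matrix (Fin N) (Fin N) ℂ) 0 0
    (Matrix.of fun (_ : Unit) (_ : Unit) => (-1 : ℂ))

lemma prod_blocks (N : ℕ) (A : Matrix (Fin N) (Fin N) ℂ) (hA : A.transpose = A) (a₀ : Fin N → ℂ) :
    (assocMat N A a₀).conjTranspose * Jmat N * assocMat N A a₀ =
      Matrix.fromBlocks
        (A.map (starRingEnd ℂ) * A - Matrix.vecMulVec (star a₀) a₀)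
        (Matrix.of fun i (_ : Unit) =>
          conj (a₀ i) - (A.map (starRingEnd ℂ)).mulVec a₀ i)
        (Matrix.of fun (_ : Unit) j => a₀ j - Matrix.vecMul (star a₀) A j)
        (Matrix.of fun (_ : Unit) (_ : Unit) =>
          ((∑ j, ‖a₀ j‖ ^ 2 : ℝ) : ℂ) - 1) := by
  ext i j
  cases i <;> cases j <;>
    simp [assocMat, Jmat, Matrix.mul_apply, Fintype.sum_sum_type,
      Matrix.vecMulVec, Matrix.mulVec, Matrix.vecMul, dotProduct,
      Matrix.one_apply, Complex.conj_mul', Finset.sum_sub_distrib, mul_comm,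
      Finset.mul_sum, ← Complex.normSq_eq_norm_sq, Complex.normSq_eq_conj_mul_self,
      sub_eq_add_neg, add_comm]
  all_goals
    have hsymm : ∀ i j, A i j = A j i := fun i j => congrFun (congrFun hA j) i
    exact Finset.sum_congr rfl fun x _ => by simp only [hsymm x]

theorem stmt_8 (N : ℕ) (A : Matrix (Fin N) (Fin N) ℂ) (hA : A.transpose = A)
    (a₀ : Fin N → ℂ) (ha₀ : Real.sqrt (∑ j, ‖a₀ j‖ ^ 2) < 1) :
    (∃ k : ℂ, k ≠ 0 ∧
        ((‖k‖ ^ 2 : ℝ) : ℂ) •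
            ((assocMat N A a₀).conjTranspose * Jmat N * assocMat N A a₀) =
          Jmat N) ↔
      (A.map (starRingEnd ℂ) * A - Matrix.vecMulVec (star a₀) a₀ =
          ((1 - ∑ j, ‖a₀ j‖ ^ 2 : ℝ) : ℂ) • (1 : Matrix (Fin N) (Fin N) ℂ) ∧
        A.mulVec (star a₀) = a₀) := by
  set S : ℝ := ∑ j, ‖a₀ j‖ ^ 2 with hSdef
  have hS0 : 0 ≤ S := Finset.sum_nonneg fun _ _ => by positivity
  have hS1 : S < 1 := by nlinarith [Real.sq_sqrt hS0, Real.sqrt_nonneg S]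
  have ht : (0:ℝ) < 1 - S := by linarith
  have hSne : ((S:ℂ) - 1) ≠ 0 := by
    intro h
    have : (S:ℂ) = 1 := by linear_combination h
    have : S = 1 := by exact_mod_cast this
    linarith
  rw [prod_blocks N A hA a₀]
  constructor
  · rintro ⟨k, hk, hEq⟩
    rw [show Jmat N = Matrix.fromBlocks (1 : Matrix (Fin N) (Fin N) ℂ) 0 0
        (Matrix.of fun (_ : Unit) (_ : Unit) => (-1 : ℂ)) from rfl,
      Matrix.fromBlocks_smul, Matrix.fromBlocks_inj] at hEq
    obtain ⟨h11, h12, _, h22⟩ := hEq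
    have h22' := congrFun (congrFun h22 ⟨⟩) ⟨⟩
    simp only [Matrix.smul_apply, Matrix.of_apply, smul_eq_mul] at h22'
    rw [← hSdef] at h22'
    have hcne : ((‖k‖^2 : ℝ):ℂ) ≠ 0 := by
      intro h; rw [h, zero_mul] at h22'; norm_num at h22'
    have hc1 : ((1 - S : ℝ):ℂ) * ((‖k‖^2 : ℝ):ℂ) = 1 := by
      push_cast at h22' ⊢; linear_combination -h22'
    constructor
    · have := congrArg (fun X => ((1 - S : ℝ):ℂ) • X) h11
      simp only [smul_smul, hc1, one_smul] at this
      exact this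
    · funext i
      have h := congrFun (congrFun h12 i) ⟨⟩
      simp only [Matrix.smul_apply, Matrix.of_apply, Matrix.zero_apply,
        smul_eq_mul] at h
      have h' : conj (a₀ i) - (A.map (starRingEnd ℂ)).mulVec a₀ i = 0 :=
        (mul_eq_zero.mp h).resolve_left hcne
      have h'' : conj (a₀ i) = ∑ j, conj (A i j) * a₀ j := by
        rw [sub_eq_zero] at h'
        simpa [Matrix.mulVec, dotProduct, Matrix.map_apply] using h'
      have := congrArg (starRingEnd ℂ) h''
      simpa [Matrix.mulVec, dotProduct, map_sum, mul_comm] using this.symm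
  · rintro ⟨h1, h2⟩
    refine ⟨((((Real.sqrt (1 - S))⁻¹ : ℝ)) : ℂ), ?_, ?_⟩
    · simpa using (Real.sqrt_pos.mpr ht).ne'
    · have hk2 : ‖((((Real.sqrt (1 - S))⁻¹ : ℝ)) : ℂ)‖ ^ 2 = (1 - S)⁻¹ := by
        rw [Complex.norm_real]
        rw [Real.norm_eq_abs, abs_inv, abs_of_nonneg (Real.sqrt_nonneg _),
          inv_pow, Real.sq_sqrt ht.le]
      rw [hk2]
      rw [show Jmat N = Matrix.fromBlocks (1 : Matrix (Fin N) (Fin N) ℂ) 0 0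
          (Matrix.of fun (_ : Unit) (_ : Unit) => (-1 : ℂ)) from rfl,
        Matrix.fromBlocks_smul, Matrix.fromBlocks_inj]
      have hone : (1 - (S:ℂ)) ≠ 0 := fun h => hSne (by linear_combination -h)
      have hcinv : (((1 - S)⁻¹ : ℝ):ℂ) * ((1 - S : ℝ):ℂ) = 1 := by
        push_cast
        exact inv_mul_cancel₀ hone
      refine ⟨?_, ?_, ?_, ?_⟩
      · rw [h1, smul_smul, hcinv, one_smul]
      · ext i j
        have := congrArg (starRingEnd ℂ) (congrFun h2 i)
        simp only [Matrix.mulVec, dotProduct, map_sum, map_mul,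
          Pi.star_apply, RingHom.id_apply, Complex.star_def,
          Complex.conj_conj] at this
        simp [Matrix.mulVec, dotProduct, Matrix.map_apply, ← this,
          mul_comm, sub_eq_zero]
      · ext i j
        have h2j := congrFun h2 j
        simp only [Matrix.mulVec, dotProduct, Pi.star_apply] at h2j
        have hsymm : ∀ i j, A i j = A j i := fun i j => congrFun (congrFun hA j) i
        simp only [Matrix.smul_apply, Matrix.of_apply, Matrix.zero_apply,
          smul_eq_mul, Matrix.vecMul, dotProduct, Pi.star_apply]
        rw [show ∑ k, star (a₀ k) * A k j = a₀ j from ?_]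
        · ring
        · rw [← h2j]
          exact Finset.sum_congr rfl fun x _ => by
            rw [hsymm x j, Complex.star_def]; ring
      · ext i j
        simp only [Matrix.smul_apply, Matrix.of_apply, smul_eq_mul]
        rw [← hSdef]
        push_cast
        rw [inv_mul_eq_div, div_eq_iff hone]
        ring
end

section
/- Let N ≥ 1, let A be a symmetric N×N complex matrix (Aᵀ = A), a₀ ∈ ℂ^N with |a₀| < 1, and a₁ ∈ ℂ with a₁ ≠ 0. Define ψ(z) = a₁·(1 − ⟨z, ā₀⟩)^{−N} and φ(z) = (a₀ − Az)/(1 − ⟨z, ā₀⟩), and assume φ maps B_N into B_N. Then the identity ψ(z)·(1 − ⟨φ(z), w⟩)^{−N} = conj(ψ(w))·(1 − ⟨z, φ(w)⟩)^{−N} holds for all z,w ∈ B_N if and only if a₁ is a real number, a₀ is a real vector (a₀ ∈ ℝ^N), and A has real entries. -/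
open ComplexConjugate

/-!
Clearing the denominator `1 - ⟨z, ā₀⟩` of `φ`, the kernel `ψ(z) K_w(φ(z))` equals
`a₁ D(z,w)^{-N}` with `D(z,w) = 1 - ⟨z, ā₀⟩ - ⟨a₀ - Az, w⟩`, and the identity says that this
kernel is Hermitian. For real data `conj D(w,z) = D(z,w)`, as `A` is then Hermitian. Conversely,
`z = w = 0` shows that `a₁` is real, and then `D(z,w)^N = conj (D(w,z))^N`. For `z = c e_j`,
`w = t e_i` both sides are `N`-th powers of affine functions of `t` with the same nonzero constant
term, so comparing derivatives at `t = 0` gives `a₀ᵢ = conj a₀ᵢ` (take `c = 0`) and then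
`Aᵢⱼ = conj Aⱼᵢ` (take `c = 1/2`). A symmetric Hermitian matrix is real.
-/

open Matrix

open Polynomial in
theorem eq_of_pow_add_mul_eq_pow_add_mul {K : Type*} [Field K] [CharZero K] {n : ℕ} (hn : n ≠ 0)
    {p a c : K} (hp : p ≠ 0) {S : Set K} (hS : S.Infinite)
    (h : ∀ t ∈ S, (p + a * t) ^ n = (p + c * t) ^ n) : a = c := by
  have hpoly : (C p + C a * X) ^ n = (C p + C c * X) ^ n :=
    eq_of_infinite_eval_eq _ _ (hS.mono fun t ht => by simpa using h t ht)
  have hderiv := congrArg (fun P => (derivative P).eval 0) hpoly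
  simp only [derivative_pow, derivative_add, derivative_C, derivative_mul, derivative_X,
    zero_add, mul_one, mul_zero, eval_mul, eval_pow, eval_add, eval_C, eval_X, add_zero] at hderiv
  exact mul_left_cancel₀ (mul_ne_zero (Nat.cast_ne_zero.2 hn) (pow_ne_zero _ hp)) hderiv

theorem single_mem_unitBall {N : ℕ} (i : Fin N) {c : ℂ} (hc : ‖c‖ < 1) :
    Pi.single i c ∈ unitBall N := by
  have : ∀ j, ‖(Pi.single i c : Fin N → ℂ) j‖ ^ 2 = (Pi.single i (‖c‖ ^ 2) : Fin N → ℝ) j :=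
    fun j => by rcases eq_or_ne j i with rfl | hj <;> simp [*]
  show ∑ j, ‖(Pi.single i c : Fin N → ℂ) j‖ ^ 2 < 1
  simp only [this, Finset.sum_pi_single', Finset.mem_univ, if_true]
  exact pow_lt_one₀ (norm_nonneg c) hc two_ne_zero

theorem norm_dotProduct_lt_one {N : ℕ} {z a : Fin N → ℂ} (hz : z ∈ unitBall N)
    (ha : Real.sqrt (∑ j, ‖a j‖ ^ 2) < 1) : ‖z ⬝ᵥ a‖ < 1 := by
  have hz' : Real.sqrt (∑ j, ‖z j‖ ^ 2) < 1 :=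
    (Real.sqrt_lt' one_pos).mpr (by simpa [unitBall] using hz)
  calc ‖z ⬝ᵥ a‖ ≤ ∑ j, ‖z j‖ * ‖a j‖ := by
        simpa only [dotProduct, norm_mul] using norm_sum_le Finset.univ fun j => z j * a j
    _ ≤ Real.sqrt (∑ j, ‖z j‖ ^ 2) * Real.sqrt (∑ j, ‖a j‖ ^ 2) :=
        Real.sum_mul_le_sqrt_mul_sqrt _ _ _
    _ < 1 := by nlinarith [Real.sqrt_nonneg (∑ j, ‖z j‖ ^ 2), Real.sqrt_nonneg (∑ j, ‖a j‖ ^ 2)]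

theorem one_sub_dotProduct_ne_zero {N : ℕ} {z a : Fin N → ℂ} (hz : z ∈ unitBall N)
    (ha : Real.sqrt (∑ j, ‖a j‖ ^ 2) < 1) : 1 - z ⬝ᵥ a ≠ 0 := by
  intro h
  have := norm_dotProduct_lt_one hz ha
  rw [← sub_eq_zero.mp h, norm_one] at this
  exact lt_irrefl _ this

section Kernel

variable {N : ℕ} (A : Matrix (Fin N) (Fin N) ℂ) (a₀ : Fin N → ℂ) (a₁ : ℂ)

/-- `(W_{ψ,φ} K_w)(z) = ψ(z) K_w(φ(z))`. -/
noncomputable def wcoKernel (z w : Fin N → ℂ) : ℂ :=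
  a₁ * (1 - ∑ j, z j * a₀ j) ^ (-(N : ℤ)) *
    (1 - ∑ j, (a₀ j - A.mulVec z j) / (1 - ∑ m, z m * a₀ m) * conj (w j)) ^ (-(N : ℤ))

/-- `D(z,w)`. -/
def kernelBase (z w : Fin N → ℂ) : ℂ := 1 - z ⬝ᵥ a₀ - (a₀ - A *ᵥ z) ⬝ᵥ star w

def IsHermitianKernel (K : (Fin N → ℂ) → (Fin N → ℂ) → ℂ) : Prop :=
  ∀ z ∈ unitBall N, ∀ w ∈ unitBall N, K z w = conj (K w z)

theorem conj_wcoKernel (z w : Fin N → ℂ) :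
    conj (wcoKernel A a₀ a₁ w z) = conj (a₁ * (1 - ∑ j, w j * a₀ j) ^ (-(N : ℤ))) *
      (1 - ∑ j, z j * conj ((a₀ j - A.mulVec w j) / (1 - ∑ m, w m * a₀ m))) ^ (-(N : ℤ)) := by
  simp only [wcoKernel, map_mul, map_zpow₀, map_sub, map_one, map_sum, Complex.conj_conj,
    mul_comm (z _)]

theorem wcoKernel_eq {z : Fin N → ℂ} (hz : 1 - z ⬝ᵥ a₀ ≠ 0) (w : Fin N → ℂ) :
    wcoKernel A a₀ a₁ z w = a₁ * kernelBase A a₀ z w ^ (-(N : ℤ)) := by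
  have hbase : kernelBase A a₀ z w =
      (1 - z ⬝ᵥ a₀) * (1 - ∑ j, (a₀ j - A.mulVec z j) / (1 - z ⬝ᵥ a₀) * conj (w j)) := by
    rw [kernelBase, mul_sub, mul_one, Finset.mul_sum]
    congr 1
    refine Finset.sum_congr rfl fun j _ => ?_
    rw [Pi.sub_apply, Pi.star_apply, Complex.star_def]
    field_simp
  rw [hbase, mul_zpow, ← mul_assoc]
  rfl

theorem kernelBase_zero_zero : kernelBase A a₀ 0 0 = 1 := by
  simp [kernelBase]

theorem conj_kernelBase_swap (ha₀ : star a₀ = a₀) (hA : A.IsHermitian) (z w : Fin N → ℂ) :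
    conj (kernelBase A a₀ w z) = kernelBase A a₀ z w := by
  have hAz : (A *ᵥ z) ⬝ᵥ star w = z ⬝ᵥ star (A *ᵥ w) := by
    rw [star_mulVec, hA.eq, dotProduct_comm z, ← dotProduct_mulVec, dotProduct_comm]
  have : ∀ u v : Fin N → ℂ, conj (u ⬝ᵥ v) = star v ⬝ᵥ star u := fun u v =>
    (star_dotProduct_star v u).symm
  simp only [kernelBase, map_sub, map_one, this, star_star, ha₀, sub_dotProduct, hAz,
    dotProduct_comm z a₀]
  ring

theorem isHermitianKernel_of_real (ha₁ : conj a₁ = a₁) (ha₀ : star a₀ = a₀)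
    (hA : A.IsHermitian) :
    IsHermitianKernel fun z w => a₁ * kernelBase A a₀ z w ^ (-(N : ℤ)) := by
  intro z _ w _
  simp only [map_mul, map_zpow₀, ha₁, conj_kernelBase_swap A a₀ ha₀ hA]

theorem pow_kernelBase_eq_of_isHermitianKernel (ha₁ : a₁ ≠ 0)
    (h : IsHermitianKernel fun z w => a₁ * kernelBase A a₀ z w ^ (-(N : ℤ))) :
    conj a₁ = a₁ ∧ ∀ z ∈ unitBall N, ∀ w ∈ unitBall N,
      kernelBase A a₀ z w ^ N = conj (kernelBase A a₀ w z) ^ N := by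
  have h0 : (0 : Fin N → ℂ) ∈ unitBall N := by simp [unitBall]
  have hreal : conj a₁ = a₁ := by
    simpa [kernelBase_zero_zero] using (h 0 h0 0 h0).symm
  refine ⟨hreal, fun z hz w hw => ?_⟩
  have := h z hz w hw
  rw [map_mul, map_zpow₀, hreal] at this
  simpa [_root_.zpow_neg, zpow_natCast] using mul_left_cancel₀ ha₁ this

theorem kernelBase_single_single (i j : Fin N) (c t : ℝ) :
    kernelBase A a₀ (Pi.single j (c : ℂ)) (Pi.single i (t : ℂ)) =
      1 - c * a₀ j + (A i j * c - a₀ i) * t := by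
  simp only [kernelBase, single_dotProduct, dotProduct_single, mulVec_single, Pi.star_single,
    RCLike.star_def, Complex.conj_ofReal, op_smul_eq_smul, Complex.coe_smul, Pi.sub_apply,
    Pi.smul_apply, col_apply, Complex.real_smul]
  ring

theorem coeff_eq_of_pow_kernelBase_eq (hN : N ≠ 0)
    (h : ∀ z ∈ unitBall N, ∀ w ∈ unitBall N,
      kernelBase A a₀ z w ^ N = conj (kernelBase A a₀ w z) ^ N)
    (i j : Fin N) {c : ℝ} (hc : |c| < 1) (hp : 1 - c * a₀ j ≠ 0)
    (hconst : c * conj (a₀ j) = c * a₀ j) :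
    A i j * c - a₀ i = conj (A j i) * c - conj (a₀ i) := by
  refine eq_of_pow_add_mul_eq_pow_add_mul hN hp
    ((Set.Ioo_infinite zero_lt_one).image Complex.ofReal_injective.injOn) ?_
  rintro _ ⟨t, ht, rfl⟩
  have hz := single_mem_unitBall j (c := c) (by simpa using hc)
  have hw := single_mem_unitBall i (c := t) (by simpa [abs_of_pos ht.1] using ht.2)
  have := h _ hz _ hw
  simp only [kernelBase_single_single, map_add, map_sub, map_mul, map_one,
    Complex.conj_ofReal] at this
  rw [this]
  congr 1
  linear_combination -hconst

theorem real_of_isHermitianKernel (hN : N ≠ 0) (ha₁ : a₁ ≠ 0)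
    (hs : ∀ z ∈ unitBall N, 1 - z ⬝ᵥ a₀ ≠ 0)
    (h : IsHermitianKernel fun z w => a₁ * kernelBase A a₀ z w ^ (-(N : ℤ))) :
    conj a₁ = a₁ ∧ star a₀ = a₀ ∧ A.IsHermitian := by
  obtain ⟨ha₁_real, hpow⟩ := pow_kernelBase_eq_of_isHermitianKernel A a₀ a₁ ha₁ h
  have ha₀ : star a₀ = a₀ := funext fun i => by
    have hdiag := coeff_eq_of_pow_kernelBase_eq A a₀ hN hpow i i (c := 0) (by simp) (by simp)
      (by simp)
    simpa using hdiag.symm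
  have hconj : ∀ i, conj (a₀ i) = a₀ i := fun i => congrFun ha₀ i
  refine ⟨ha₁_real, ha₀, IsHermitian.ext fun i j => ?_⟩
  have hp : 1 - ((1 / 2 : ℝ) : ℂ) * a₀ j ≠ 0 := by
    simpa [single_dotProduct] using
      hs _ (single_mem_unitBall j (c := ((1 / 2 : ℝ) : ℂ)) (by norm_num))
  have hcoeff := coeff_eq_of_pow_kernelBase_eq A a₀ hN hpow i j (c := 1 / 2) (by norm_num) hp
    (by rw [hconj])
  rw [hconj] at hcoeff
  push_cast at hcoeff
  show conj (A j i) = A i j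
  linear_combination (-2) * hcoeff

theorem isHermitianKernel_iff (hN : N ≠ 0) (ha₁ : a₁ ≠ 0)
    (hs : ∀ z ∈ unitBall N, 1 - z ⬝ᵥ a₀ ≠ 0) :
    (IsHermitianKernel fun z w => a₁ * kernelBase A a₀ z w ^ (-(N : ℤ))) ↔
      conj a₁ = a₁ ∧ star a₀ = a₀ ∧ A.IsHermitian :=
  ⟨real_of_isHermitianKernel A a₀ a₁ hN ha₁ hs,
    fun ⟨h₁, h₀, hA⟩ => isHermitianKernel_of_real A a₀ a₁ h₁ h₀ hA⟩

end Kernel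

theorem Matrix.isHermitian_iff_forall_im_eq_zero {n : Type*} {A : Matrix n n ℂ} (hA : Aᵀ = A) :
    A.IsHermitian ↔ ∀ i j, (A i j).im = 0 := by
  rw [Matrix.IsHermitian, Matrix.conjTranspose, hA, ← Matrix.ext_iff]
  simp only [Matrix.map_apply, ← Complex.conj_eq_iff_im]
  rfl

theorem stmt_9_general (N : ℕ) (hN : 1 ≤ N)
    (A : Matrix (Fin N) (Fin N) ℂ) (hA : A.transpose = A)
    (a₀ : Fin N → ℂ) (ha₀ : Real.sqrt (∑ j, ‖a₀ j‖ ^ 2) < 1)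
    (a₁ : ℂ) (ha₁ : a₁ ≠ 0) :
    (∀ z ∈ unitBall N, ∀ w ∈ unitBall N,
        (a₁ * (1 - ∑ j, z j * a₀ j) ^ (-(N : ℤ))) *
            (1 - ∑ j, (a₀ j - A.mulVec z j) / (1 - ∑ m, z m * a₀ m) * conj (w j)) ^
              (-(N : ℤ)) =
          conj (a₁ * (1 - ∑ j, w j * a₀ j) ^ (-(N : ℤ))) *
            (1 - ∑ j, z j * conj ((a₀ j - A.mulVec w j) / (1 - ∑ m, w m * a₀ m))) ^
              (-(N : ℤ))) ↔
      (a₁.im = 0 ∧ (∀ j, (a₀ j).im = 0) ∧ ∀ i j, (A i j).im = 0) := by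
  have hs : ∀ z ∈ unitBall N, 1 - z ⬝ᵥ a₀ ≠ 0 := fun z hz => one_sub_dotProduct_ne_zero hz ha₀
  calc _ ↔ IsHermitianKernel (wcoKernel A a₀ a₁) :=
        forall₂_congr fun z _ => forall₂_congr fun w _ => by rw [← conj_wcoKernel]; rfl
    _ ↔ IsHermitianKernel fun z w => a₁ * kernelBase A a₀ z w ^ (-(N : ℤ)) :=
        forall₂_congr fun z hz => forall₂_congr fun w hw => by
          rw [wcoKernel_eq A a₀ a₁ (hs z hz), wcoKernel_eq A a₀ a₁ (hs w hw)]
    _ ↔ conj a₁ = a₁ ∧ star a₀ = a₀ ∧ A.IsHermitian :=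
        isHermitianKernel_iff A a₀ a₁ (by omega) ha₁ hs
    _ ↔ _ := by
        rw [Matrix.isHermitian_iff_forall_im_eq_zero hA, funext_iff]
        simp only [Pi.star_apply, ← Complex.conj_eq_iff_im]
        rfl

theorem stmt_9 (N : ℕ) (hN : 1 ≤ N)
    (A : Matrix (Fin N) (Fin N) ℂ) (hA : A.transpose = A)
    (a₀ : Fin N → ℂ) (ha₀ : Real.sqrt (∑ j, ‖a₀ j‖ ^ 2) < 1)
    (a₁ : ℂ) (ha₁ : a₁ ≠ 0)
    (hmap : ∀ z ∈ unitBall N,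
      (fun i => (a₀ i - A.mulVec z i) / (1 - ∑ j, z j * a₀ j)) ∈ unitBall N) :
    (∀ z ∈ unitBall N, ∀ w ∈ unitBall N,
        (a₁ * (1 - ∑ j, z j * a₀ j) ^ (-(N : ℤ))) *
            (1 - ∑ j, (a₀ j - A.mulVec z j) / (1 - ∑ m, z m * a₀ m) * conj (w j)) ^
              (-(N : ℤ)) =
          conj (a₁ * (1 - ∑ j, w j * a₀ j) ^ (-(N : ℤ))) *
            (1 - ∑ j, z j * conj ((a₀ j - A.mulVec w j) / (1 - ∑ m, w m * a₀ m))) ^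
              (-(N : ℤ))) ↔
      (a₁.im = 0 ∧ (∀ j, (a₀ j).im = 0) ∧ ∀ i j, (A i j).im = 0) :=
  stmt_9_general N hN A hA a₀ ha₀ a₁ ha₁
end

section
/- Let a ∈ ℂ^N with 0 < |a| < 1, let U be a symmetric unitary N×N complex matrix with U·a = ā, let μ ∈ ℂ with |μ| = 1, set s = √(1−|a|²), T = s·I_N + (1−s)·(a·aᴴ)/|a|² (where a·aᴴ has (i,j) entry a_i·conj(a_j)), Ψ(z) = μ·(1−|a|²)^{N/2}·(1 − ⟨z,a⟩)^{−N} and Φ(z) = U·(a − Tz)/(1 − ⟨z,a⟩), and assume Φ maps B_N into B_N. Then for all z,w ∈ B_N: Ψ(z)·(1 − Σ_j Φ_j(z)·w_j)^{−N} = Ψ(w)·(1 − Σ_j z_j·Φ_j(w))^{−N}. -/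
open ComplexConjugate

/-- `T = s·I_N + (1−s)·(a·aᴴ)/|a|²` with `s = √(1−|a|²)`, the self-adjoint linear
part of the involutive automorphism `φ_a` of the unit ball. -/
noncomputable def Tmat (N : ℕ) (a : Fin N → ℂ) : Matrix (Fin N) (Fin N) ℂ :=
  (Real.sqrt (1 - ∑ j, ‖a j‖ ^ 2) : ℂ) • (1 : Matrix (Fin N) (Fin N) ℂ) +
    (((1 - Real.sqrt (1 - ∑ j, ‖a j‖ ^ 2)) / ∑ j, ‖a j‖ ^ 2 : ℝ) : ℂ) •
      Matrix.vecMulVec a (star a)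

/-- The weight `Ψ(z) = μ·(1−|a|²)^{N/2}·(1−⟨z,a⟩)^{−N}`. -/
noncomputable def Psi (N : ℕ) (a : Fin N → ℂ) (μ : ℂ) (z : Fin N → ℂ) : ℂ :=
  μ * ((Real.sqrt (1 - ∑ j, ‖a j‖ ^ 2) ^ N : ℝ) : ℂ) *
    (1 - ∑ j, z j * conj (a j)) ^ (-(N : ℤ))

/-- The symbol `Φ(z) = U·(a − Tz)/(1 − ⟨z,a⟩)`. -/
noncomputable def Phi (N : ℕ) (a : Fin N → ℂ) (U : Matrix (Fin N) (Fin N) ℂ)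
    (z : Fin N → ℂ) : Fin N → ℂ :=
  fun i => U.mulVec (fun j => a j - (Tmat N a).mulVec z j) i /
    (1 - ∑ j, z j * conj (a j))

lemma zpow_aux (c x y : ℂ) (n : ℤ) (hx : x ≠ 0) :
    c * x ^ (-n) * (y / x) ^ (-n) = c * y ^ (-n) := by
  have h1 : (y / x) ^ (-n) = y ^ (-n) * x ^ n := by
    rw [div_zpow, zpow_neg, zpow_neg, div_eq_mul_inv, inv_inv]
  have h2 : x ^ (-n) * x ^ n = 1 := by
    rw [← zpow_add₀ hx]; simp
  calc c * x ^ (-n) * (y / x) ^ (-n)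
      = c * y ^ (-n) * (x ^ (-n) * x ^ n) := by rw [h1]; ring
    _ = c * y ^ (-n) := by rw [h2, mul_one]

theorem stmt_11 (N : ℕ) (a : Fin N → ℂ)
    (ha0 : 0 < ∑ j, ‖a j‖ ^ 2) (ha1 : ∑ j, ‖a j‖ ^ 2 < 1)
    (U : Matrix (Fin N) (Fin N) ℂ) (hUsymm : U.transpose = U)
    (hUunit : U * U.map (starRingEnd ℂ) = 1)
    (hUa : U.mulVec a = star a)
    (μ : ℂ) (hμ : ‖μ‖ = 1)
    (hmap : ∀ z ∈ unitBall N, Phi N a U z ∈ unitBall N) :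
    ∀ z ∈ unitBall N, ∀ w ∈ unitBall N,
      Psi N a μ z * (1 - ∑ j, Phi N a U z j * w j) ^ (-(N : ℤ)) =
        Psi N a μ w * (1 - ∑ j, z j * Phi N a U w j) ^ (-(N : ℤ)) := by
  -- abbreviations
  set sC : ℂ := ((Real.sqrt (1 - ∑ j, ‖a j‖ ^ 2) : ℝ) : ℂ) with hsC
  set cC : ℂ := (((1 - Real.sqrt (1 - ∑ j, ‖a j‖ ^ 2)) / ∑ j, ‖a j‖ ^ 2 : ℝ) : ℂ) with hcC
  -- nonvanishing of the denominator on the ball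
  have hd : ∀ z ∈ unitBall N, (1 - ∑ j, z j * conj (a j)) ≠ 0 := by
    intro z hz h
    have hz' : ∑ j, ‖z j‖ ^ 2 < 1 := hz
    have hzn : (0:ℝ) ≤ ∑ j, ‖z j‖ ^ 2 := Finset.sum_nonneg fun j _ => by positivity
    have hbound : ‖∑ j, z j * conj (a j)‖ < 1 := by
      have h1 : ‖∑ j, z j * conj (a j)‖ ≤ ∑ j, ‖z j‖ * ‖a j‖ := by
        refine (norm_sum_le _ _).trans (le_of_eq ?_)
        refine Finset.sum_congr rfl fun j _ => ?_
        rw [norm_mul, RCLike.norm_conj]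
      have h2 : (∑ j, ‖z j‖ * ‖a j‖) ^ 2 ≤ (∑ j, ‖z j‖ ^ 2) * ∑ j, ‖a j‖ ^ 2 :=
        Finset.sum_mul_sq_le_sq_mul_sq _ _ _
      have h3 : (0:ℝ) ≤ ∑ j, ‖z j‖ * ‖a j‖ :=
        Finset.sum_nonneg fun j _ => mul_nonneg (norm_nonneg _) (norm_nonneg _)
      nlinarith [hz', ha1, ha0, norm_nonneg (∑ j, z j * conj (a j))]
    rw [sub_eq_zero] at h
    rw [← h] at hbound
    simp at hbound
  -- entrywise form of hUa
  have hUa' : ∀ j, (∑ k, U j k * a k) = conj (a j) := by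
    intro j
    have := congrFun hUa j
    simpa [Matrix.mulVec, dotProduct, Complex.star_def] using this
  have hUs : ∀ j k, U j k = U k j := by
    intro j k
    have h := congrFun (congrFun hUsymm j) k
    rw [Matrix.transpose_apply] at h
    exact h.symm
  -- action of Tmat
  have hT : ∀ (x : Fin N → ℂ) k, (Tmat N a).mulVec x k
      = sC * x k + cC * (a k * ∑ l, x l * conj (a l)) := by
    intro x k
    rw [Tmat, Matrix.add_mulVec, Matrix.smul_mulVec, Matrix.smul_mulVec,
      Matrix.one_mulVec]
    simp only [Pi.add_apply, Pi.smul_apply, smul_eq_mul, ← hsC, ← hcC]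
    congr 1
    simp only [Matrix.mulVec, dotProduct, Matrix.vecMulVec_apply, Pi.star_apply,
      Complex.star_def, Finset.mul_sum]
    exact Finset.sum_congr rfl fun l _ => by ring
  -- the numerator sum
  have hV : ∀ x y : Fin N → ℂ,
      (∑ j, U.mulVec (fun i => a i - (Tmat N a).mulVec x i) j * y j)
        = (∑ j, y j * conj (a j)) - sC * (∑ j, ∑ k, U j k * x k * y j)
          - cC * (∑ l, x l * conj (a l)) * (∑ j, y j * conj (a j)) := by
    intro x y
    have hrow : ∀ j, U.mulVec (fun i => a i - (Tmat N a).mulVec x i) j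
        = conj (a j) - sC * (∑ k, U j k * x k)
          - cC * (∑ l, x l * conj (a l)) * conj (a j) := by
      intro j
      have hstart : U.mulVec (fun i => a i - (Tmat N a).mulVec x i) j
          = ∑ k, U j k * (a k - (Tmat N a).mulVec x k) := rfl
      rw [hstart]
      have : ∀ k ∈ Finset.univ, U j k * (a k - (Tmat N a).mulVec x k)
          = U j k * a k - sC * (U j k * x k)
            - cC * (∑ l, x l * conj (a l)) * (U j k * a k) := by
        intro k _; rw [hT]; ring
      rw [Finset.sum_congr rfl this]
      rw [Finset.sum_sub_distrib, Finset.sum_sub_distrib, ← Finset.mul_sum, ← Finset.mul_sum,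
        hUa' j]
    have hAy : (∑ j, conj (a j) * y j) = ∑ j, y j * conj (a j) :=
      Finset.sum_congr rfl fun j _ => mul_comm _ _
    calc (∑ j, U.mulVec (fun i => a i - (Tmat N a).mulVec x i) j * y j)
        = ∑ j, (conj (a j) * y j - sC * (∑ k, U j k * x k * y j)
            - cC * (∑ l, x l * conj (a l)) * (conj (a j) * y j)) := by
          refine Finset.sum_congr rfl fun j _ => ?_
          rw [hrow j]
          have hs : (∑ k, U j k * x k * y j) = (∑ k, U j k * x k) * y j :=
            (Finset.sum_mul _ _ _).symm
          rw [hs]; ring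
      _ = _ := by
          rw [Finset.sum_sub_distrib, Finset.sum_sub_distrib, ← Finset.mul_sum, ← Finset.mul_sum,
            hAy]
  -- symmetry of the quadratic form
  have hQ : ∀ x y : Fin N → ℂ,
      (∑ j, ∑ k, U j k * x k * y j) = ∑ j, ∑ k, U j k * y k * x j := by
    intro x y
    rw [Finset.sum_comm]
    refine Finset.sum_congr rfl fun k _ => Finset.sum_congr rfl fun j _ => ?_
    rw [hUs j k]; ring
  -- the key symmetric quantity
  have key : ∀ x y : Fin N → ℂ,
      (1 - ∑ j, x j * conj (a j)) - (∑ j, U.mulVec (fun i => a i - (Tmat N a).mulVec x i) j * y j)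
      = (1 - ∑ j, y j * conj (a j))
        - (∑ j, U.mulVec (fun i => a i - (Tmat N a).mulVec y i) j * x j) := by
    intro x y
    rw [hV, hV, hQ x y]; ring
  -- final assembly
  intro z hz w hw
  have hdz := hd z hz
  have hdw := hd w hw
  have hPz : (1 - ∑ j, Phi N a U z j * w j)
      = ((1 - ∑ j, z j * conj (a j))
          - (∑ j, U.mulVec (fun i => a i - (Tmat N a).mulVec z i) j * w j))
        / (1 - ∑ j, z j * conj (a j)) := by
    rw [sub_div, div_self hdz]
    congr 1
    rw [Finset.sum_div]
    exact Finset.sum_congr rfl fun j _ => by rw [Phi]; ring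
  have hPw : (1 - ∑ j, z j * Phi N a U w j)
      = ((1 - ∑ j, w j * conj (a j))
          - (∑ j, U.mulVec (fun i => a i - (Tmat N a).mulVec w i) j * z j))
        / (1 - ∑ j, w j * conj (a j)) := by
    rw [sub_div, div_self hdw]
    congr 1
    rw [Finset.sum_div]
    exact Finset.sum_congr rfl fun j _ => by rw [Phi]; ring
  rw [hPz, hPw, Psi, Psi, zpow_aux _ _ _ _ hdz, zpow_aux _ _ _ _ hdw, key z w]
end

section
/- Let A be a symmetric N×N complex matrix (Aᵀ = A), λ ∈ ℂ, and b ∈ ℝ^N with 0 < |b| < 1 and A·b = λ·b. Set c = (I_N − A)·b and T = √(1−|b|²)·I_N + (1 − √(1−|b|²))·(b·bᵀ)/|b|², where b·bᵀ has entries b_i·b_j. Then for all z,w ∈ ℂ^N: −zᵀAᵀb − bᵀw + zᵀAᵀTw + cᵀTw = −zᵀb + zᵀTc − bᵀAw + zᵀTAw, where for vectors u,v and a matrix M, uᵀMv denotes the bilinear form Σ_{i,j} u_i·M_{ij}·v_j and uᵀv = Σ_i u_i·v_i. -/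
open ComplexConjugate

/-- The real vector `b ∈ ℝ^N` viewed in `ℂ^N`. -/
def bC (N : ℕ) (b : Fin N → ℝ) : Fin N → ℂ := fun i => (b i : ℂ)

/-- `T = √(1−|b|²)·I_N + (1 − √(1−|b|²))·(b·bᵀ)/|b|²`, the self-adjoint linear
part of the involutive automorphism `φ_b` of the unit ball. -/
noncomputable def Tb (N : ℕ) (b : Fin N → ℝ) : Matrix (Fin N) (Fin N) ℂ :=
  (Real.sqrt (1 - ∑ i, b i ^ 2) : ℂ) • (1 : Matrix (Fin N) (Fin N) ℂ) +
    (((1 - Real.sqrt (1 - ∑ i, b i ^ 2)) / ∑ i, b i ^ 2 : ℝ) : ℂ) •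
      Matrix.vecMulVec (bC N b) (bC N b)

lemma bC_dot (N : ℕ) (b : Fin N → ℝ) :
    dotProduct (bC N b) (bC N b) = ((∑ i, b i ^ 2 : ℝ) : ℂ) := by
  simp [dotProduct, bC, sq]

lemma vmv_mulVec (N : ℕ) (u v x : Fin N → ℂ) :
    (Matrix.vecMulVec u v).mulVec x = fun i => u i * dotProduct v x := by
  funext i
  simp [Matrix.mulVec, dotProduct, Matrix.vecMulVec_apply, Finset.mul_sum, mul_assoc]

lemma mul_vmv (N : ℕ) (A : Matrix (Fin N) (Fin N) ℂ) (u v : Fin N → ℂ) :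
    A * Matrix.vecMulVec u v = Matrix.vecMulVec (A.mulVec u) v := by
  ext i j
  simp [Matrix.mul_apply, Matrix.vecMulVec_apply, Matrix.mulVec, dotProduct,
    Finset.sum_mul, mul_assoc]

lemma vmv_mul (N : ℕ) (A : Matrix (Fin N) (Fin N) ℂ) (u v : Fin N → ℂ) :
    Matrix.vecMulVec u v * A = Matrix.vecMulVec u (Matrix.vecMul v A) := by
  ext i j
  simp [Matrix.mul_apply, Matrix.vecMulVec_apply, Matrix.vecMul, dotProduct,
    Finset.mul_sum, mul_assoc]

lemma Tb_symm (N : ℕ) (b : Fin N → ℝ) : (Tb N b).transpose = Tb N b := by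
  ext i j
  simp [Tb, Matrix.one_apply, Matrix.vecMulVec_apply]
  by_cases h : i = j <;> simp [h, mul_comm, eq_comm]

lemma Tb_mulVec (N : ℕ) (b : Fin N → ℝ) (hb0 : 0 < ∑ i, b i ^ 2) :
    (Tb N b).mulVec (bC N b) = bC N b := by
  have hS : ((∑ i, b i ^ 2 : ℝ) : ℂ) ≠ 0 := by exact_mod_cast hb0.ne'
  funext i
  rw [Tb, Matrix.add_mulVec, Matrix.smul_mulVec, Matrix.smul_mulVec,
    Matrix.one_mulVec, vmv_mulVec, bC_dot]
  simp only [Pi.add_apply, Pi.smul_apply, smul_eq_mul]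
  have hS2 : (∑ x : Fin N, ((b x : ℝ) : ℂ) ^ 2) ≠ 0 := by
    have h : (∑ x : Fin N, ((b x : ℝ) : ℂ) ^ 2) = ((∑ i, b i ^ 2 : ℝ) : ℂ) := by
      push_cast; rfl
    rw [h]; exact hS
  have : (((1 - Real.sqrt (1 - ∑ i, b i ^ 2)) / ∑ i, b i ^ 2 : ℝ) : ℂ) *
      ((∑ i, b i ^ 2 : ℝ) : ℂ) = 1 - (Real.sqrt (1 - ∑ i, b i ^ 2) : ℂ) := by
    push_cast
    rw [div_mul_cancel₀ _ hS2]
  rw [mul_comm (bC N b i), ← mul_assoc, this]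
  ring

theorem stmt_14 (N : ℕ) (A : Matrix (Fin N) (Fin N) ℂ) (hA : A.transpose = A)
    (lam : ℂ) (b : Fin N → ℝ)
    (hb0 : 0 < ∑ i, b i ^ 2) (hb1 : ∑ i, b i ^ 2 < 1)
    (hAb : A.mulVec (bC N b) = fun i => lam * bC N b i) :
    ∀ z w : Fin N → ℂ,
      -(∑ i, ∑ j, z i * A.transpose i j * bC N b j) - (∑ i, bC N b i * w i) +
          (∑ i, ∑ j, z i * (A.transpose * Tb N b) i j * w j) +
          (∑ i, ∑ j, (1 - A).mulVec (bC N b) i * Tb N b i j * w j) =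
        -(∑ i, z i * bC N b i) +
          (∑ i, ∑ j, z i * Tb N b i j * (1 - A).mulVec (bC N b) j) -
          (∑ i, ∑ j, bC N b i * A i j * w j) +
          (∑ i, ∑ j, z i * (Tb N b * A) i j * w j) := by
  intro z w
  have hsb : A.mulVec (bC N b) = lam • bC N b := by funext i; rw [hAb]; rfl
  have key : ∀ (M : Matrix (Fin N) (Fin N) ℂ) (u v : Fin N → ℂ),
      ∑ i, ∑ j, u i * M i j * v j = dotProduct u (M.mulVec v) := by
    intro M u v
    simp [dotProduct, Matrix.mulVec, Finset.mul_sum, mul_assoc]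
  have hc : (1 - A).mulVec (bC N b) = bC N b - lam • bC N b := by
    rw [Matrix.sub_mulVec, Matrix.one_mulVec, hsb]
  have hT := Tb_mulVec N b hb0
  have hTA : Tb N b * A = A * Tb N b := by
    rw [Tb, Matrix.add_mul, Matrix.mul_add, Matrix.smul_mul, Matrix.mul_smul,
      Matrix.smul_mul, Matrix.mul_smul, Matrix.one_mul, Matrix.mul_one,
      mul_vmv, vmv_mul, hsb]
    have h1 : Matrix.vecMul (bC N b) A = lam • bC N b := by
      rw [← hA, Matrix.vecMul_transpose, hsb]
    rw [h1]
    congr 1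
    congr 1
    ext i j
    simp [Matrix.vecMulVec_apply]
    ring
  have hbTw : dotProduct (bC N b) ((Tb N b).mulVec w)
      = dotProduct (bC N b) w := by
    rw [Matrix.dotProduct_mulVec, ← Tb_symm N b, Matrix.vecMul_transpose, hT]
  have hbAw : dotProduct (bC N b) (A.mulVec w)
      = lam * dotProduct (bC N b) w := by
    rw [Matrix.dotProduct_mulVec, ← hA, Matrix.vecMul_transpose, hsb,
      smul_dotProduct, smul_eq_mul]
  have h2 : ∑ i, bC N b i * w i = dotProduct (bC N b) w := rfl
  have h3 : ∑ i, z i * bC N b i = dotProduct z (bC N b) := rfl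
  rw [key, key, key, key, key, key, h2, h3, hA, hc, hTA]
  simp only [hsb, hbTw, hbAw, hT, Matrix.mulVec_sub, Matrix.mulVec_smul,
    sub_dotProduct, dotProduct_sub, smul_dotProduct,
    dotProduct_smul, smul_eq_mul]
  ring
end

section
/- Let A be a symmetric N×N complex matrix (Aᵀ = A), let U be a symmetric unitary N×N complex matrix (Uᵀ = U, U·conj(U) = I_N), and let a₀ ∈ ℂ^N with |a₀| < 1. Let M₁ be the (N+1)×(N+1) block matrix with top-left block −A·U, top-right column a₀, bottom-left row −a₀ᵀ·U, and bottom-right entry 1; let M₂ be the (N+1)×(N+1) block matrix with top-left block −(A·U)ᴴ = −Ū·Ā, top-right column Ū·ā₀, bottom-left row −ā₀ᵀ, and bottom-right entry 1, where Ā, Ū, ā₀ denote entrywise conjugates and ᴴ the conjugate transpose. Then there exists k ∈ ℂ with k ≠ 0 and M₁·M₂ = k·(M₂·M₁) if and only if Ū·Ā·A·U − (Ū·ā₀)·(a₀ᵀ·U) = A·Ā − a₀·ā₀ᵀ and Ū·Ā·a₀ − Ū·ā₀ = A·ā₀ − a₀, where a₀·ā₀ᵀ is the N×N matrix with (i,j)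 entry (a₀)_i·conj((a₀)_j) and (Ū·ā₀)·(a₀ᵀ·U) is the N×N product of the column Ū·ā₀ with the row a₀ᵀ·U. -/
open ComplexConjugate

/-- The matrix associated with the linear fractional map
`φ(z) = (a₀ − AUz)/(1 − ⟨Uz, ā₀⟩)`: block matrix with top-left `−A·U`,
top-right column `a₀`, bottom-left row `−a₀ᵀ·U`, bottom-right entry `1`. -/
noncomputable def M1 (N : ℕ) (A U : Matrix (Fin N) (Fin N) ℂ) (a₀ : Fin N → ℂ) :
    Matrix (Fin N ⊕ Unit) (Fin N ⊕ Unit) ℂ :=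
  Matrix.fromBlocks (-(A * U)) (Matrix.of fun i (_ : Unit) => a₀ i)
    (Matrix.of fun (_ : Unit) j => -(Matrix.vecMul a₀ U j))
    (Matrix.of fun (_ : Unit) (_ : Unit) => (1 : ℂ))

/-- The matrix associated with the adjoint map
`σ(z) = (−(AU)ᴴ z + Ū·ā₀)/(1 − ⟨z, a₀⟩)`: block matrix with top-left `−(A·U)ᴴ`,
top-right column `Ū·ā₀`, bottom-left row `−ā₀ᵀ`, bottom-right entry `1`. -/
noncomputable def M2 (N : ℕ) (A U : Matrix (Fin N) (Fin N) ℂ) (a₀ : Fin N → ℂ) :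
    Matrix (Fin N ⊕ Unit) (Fin N ⊕ Unit) ℂ :=
  Matrix.fromBlocks (-(A * U).conjTranspose)
    (Matrix.of fun i (_ : Unit) => (U.map (starRingEnd ℂ)).mulVec (star a₀) i)
    (Matrix.of fun (_ : Unit) j => -(starRingEnd ℂ (a₀ j)))
    (Matrix.of fun (_ : Unit) (_ : Unit) => (1 : ℂ))

/-!
Both products `M₁ M₂` and `M₂ M₁` have bottom-right entry `1 - a₀ ⬝ᵥ ā₀ = 1 - |a₀|² ≠ 0`, so any
`k` with `M₁ M₂ = k • M₂ M₁` equals `1` and the condition says that `M₁` and `M₂` commute.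
Comparing blocks, the top-left and top-right blocks give the two equations, the bottom-right
blocks agree identically, and the bottom-left equation is the top-right one multiplied by `U`
and transposed, using `Aᵀ = A`, `Uᵀ = U` and `U Ū = 1`.
-/

namespace Matrix

theorem exists_ne_zero_smul_eq_iff_eq {K m n : Type*} [Field K] {X Y : Matrix m n K} (i : m)
    (j : n) (hij : X i j = Y i j) (hne : Y i j ≠ 0) : (∃ k : K, k ≠ 0 ∧ X = k • Y) ↔ X = Y := by
  refine ⟨?_, fun h => ⟨1, one_ne_zero, by rw [h, one_smul]⟩⟩
  rintro ⟨k, -, hk⟩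
  have hk1 : k = 1 := by
    have := congrFun (congrFun hk i) j
    rw [hij, smul_apply, smul_eq_mul] at this
    exact (mul_eq_right₀ hne).mp this.symm
  rwa [hk1, one_smul] at hk

variable {R n : Type*}

/-- The matrix `[[B, c], [r, 1]]` of the linear fractional map `z ↦ (B z + c) / (r ⬝ᵥ z + 1)`. -/
def lftMatrix [Zero R] [One R] (B : Matrix n n R) (c r : n → R) :
    Matrix (n ⊕ Unit) (n ⊕ Unit) R :=
  fromBlocks B (replicateCol Unit c) (replicateRow Unit r) 1

theorem lftMatrix_mul [Fintype n] [DecidableEq n] [CommRing R] (B₁ B₂ : Matrix n n R)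
    (c₁ r₁ c₂ r₂ : n → R) :
    lftMatrix B₁ c₁ r₁ * lftMatrix B₂ c₂ r₂ =
      fromBlocks (B₁ * B₂ + vecMulVec c₁ r₂) (replicateCol Unit (B₁ *ᵥ c₂ + c₁))
        (replicateRow Unit (r₁ ᵥ* B₂ + r₂)) (of fun _ _ => r₁ ⬝ᵥ c₂ + 1) := by
  rw [lftMatrix, lftMatrix, fromBlocks_multiply, vecMulVec_eq Unit, replicateCol_add,
    replicateCol_mulVec, replicateRow_add, replicateRow_vecMul, replicateRow_mul_replicateCol,
    Matrix.mul_one, Matrix.one_mul]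
  congr 1
  ext
  simp

theorem conjTranspose_eq_map_conj {A : Matrix n n ℂ} (hA : Aᵀ = A) : Aᴴ = A.map conj := by
  rw [conjTranspose, hA]; rfl

end Matrix

open Matrix

theorem one_sub_dotProduct_star_ne_zero {n : Type*} [Fintype n] {a : n → ℂ}
    (ha : Real.sqrt (∑ j, ‖a j‖ ^ 2) < 1) : 1 - a ⬝ᵥ star a ≠ 0 := by
  have hnorm : ‖WithLp.toLp 2 a‖ < 1 := by rwa [EuclideanSpace.norm_eq]
  rw [← EuclideanSpace.inner_toLp_toLp, inner_self_eq_norm_sq_to_K, sub_ne_zero,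
    ← RCLike.ofReal_pow, ← RCLike.ofReal_one, Ne, RCLike.ofReal_inj]
  exact (show ‖WithLp.toLp 2 a‖ ^ 2 < 1 by nlinarith [norm_nonneg (WithLp.toLp 2 a)]).ne'

section

variable {N : ℕ} {A U : Matrix (Fin N) (Fin N) ℂ} (a₀ : Fin N → ℂ)

theorem M1_eq_lftMatrix : M1 N A U a₀ = lftMatrix (-(A * U)) a₀ (-(a₀ ᵥ* U)) := by
  rw [M1, lftMatrix]
  congr

theorem M2_eq_lftMatrix (hA : Aᵀ = A) (hU : Uᵀ = U) :
    M2 N A U a₀ = lftMatrix (-(U.map conj * A.map conj)) (U.map conj *ᵥ star a₀) (-star a₀) := by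
  rw [M2, lftMatrix, conjTranspose_mul, conjTranspose_eq_map_conj hA, conjTranspose_eq_map_conj hU]
  congr

theorem M1_mul_M2 (hA : Aᵀ = A) (hU : Uᵀ = U) (hUunit : U * U.map conj = 1) :
    M1 N A U a₀ * M2 N A U a₀ =
      fromBlocks (A * A.map conj - vecMulVec a₀ (star a₀))
        (replicateCol Unit (a₀ - A *ᵥ star a₀)) (replicateRow Unit (a₀ ᵥ* A.map conj - star a₀))
        (of fun _ _ => 1 - a₀ ⬝ᵥ star a₀) := by
  rw [M1_eq_lftMatrix, M2_eq_lftMatrix a₀ hA hU, lftMatrix_mul]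
  congr 2
  · rw [neg_mul_neg, vecMulVec_neg, ← sub_eq_add_neg, mul_assoc, ← mul_assoc U, hUunit, one_mul]
  · rw [neg_mulVec, mulVec_mulVec, mul_assoc, hUunit, mul_one, neg_add_eq_sub]
  · rw [neg_vecMul, vecMul_neg, neg_neg, vecMul_vecMul, ← mul_assoc, hUunit, one_mul,
      ← sub_eq_add_neg]
  · ext
    rw [neg_dotProduct, dotProduct_mulVec, vecMul_vecMul, hUunit, vecMul_one, neg_add_eq_sub]

theorem M2_mul_M1 (hA : Aᵀ = A) (hU : Uᵀ = U) :
    M2 N A U a₀ * M1 N A U a₀ =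
      fromBlocks (U.map conj * A.map conj * A * U - vecMulVec (U.map conj *ᵥ star a₀) (a₀ ᵥ* U))
        (replicateCol Unit (U.map conj *ᵥ star a₀ - (U.map conj * A.map conj) *ᵥ a₀))
        (replicateRow Unit (star a₀ ᵥ* (A * U) - a₀ ᵥ* U))
        (of fun _ _ => 1 - a₀ ⬝ᵥ star a₀) := by
  rw [M1_eq_lftMatrix, M2_eq_lftMatrix a₀ hA hU, lftMatrix_mul]
  congr 2
  · rw [neg_mul_neg, vecMulVec_neg, ← sub_eq_add_neg, ← mul_assoc]
  · rw [neg_mulVec, neg_add_eq_sub]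
  · rw [neg_vecMul, vecMul_neg, neg_neg, ← sub_eq_add_neg]
  · ext
    rw [neg_dotProduct, dotProduct_comm, neg_add_eq_sub]

/-- Multiplying the column equation by `U` and transposing gives the row equation. -/
theorem row_block_eq_of_col_block_eq (hA : Aᵀ = A) (hU : Uᵀ = U) (hUunit : U * U.map conj = 1)
    (h : (U.map conj * A.map conj) *ᵥ a₀ - U.map conj *ᵥ star a₀ = A *ᵥ star a₀ - a₀) :
    a₀ ᵥ* A.map conj - star a₀ = star a₀ ᵥ* (A * U) - a₀ ᵥ* U := by
  have hU_mul := congrArg (U *ᵥ ·) h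
  simp only [mulVec_sub, mulVec_mulVec, ← mul_assoc, hUunit, one_mul, one_mulVec] at hU_mul
  simp only [← mulVec_transpose, transpose_mul, ← transpose_map, hA, hU]
  exact hU_mul

end

theorem stmt_16 (N : ℕ) (A U : Matrix (Fin N) (Fin N) ℂ)
    (hA : A.transpose = A) (hUsymm : U.transpose = U)
    (hUunit : U * U.map (starRingEnd ℂ) = 1)
    (a₀ : Fin N → ℂ) (ha₀ : Real.sqrt (∑ j, ‖a₀ j‖ ^ 2) < 1) :
    (∃ k : ℂ, k ≠ 0 ∧
        M1 N A U a₀ * M2 N A U a₀ = k • (M2 N A U a₀ * M1 N A U a₀)) ↔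
      (U.map (starRingEnd ℂ) * A.map (starRingEnd ℂ) * A * U -
            Matrix.vecMulVec ((U.map (starRingEnd ℂ)).mulVec (star a₀))
              (Matrix.vecMul a₀ U) =
          A * A.map (starRingEnd ℂ) - Matrix.vecMulVec a₀ (star a₀) ∧
        (U.map (starRingEnd ℂ) * A.map (starRingEnd ℂ)).mulVec a₀ -
            (U.map (starRingEnd ℂ)).mulVec (star a₀) =
          A.mulVec (star a₀) - a₀) := by
  have hM₁M₂ := M1_mul_M2 a₀ hA hUsymm hUunit
  have hM₂M₁ := M2_mul_M1 a₀ hA hUsymm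
  have hcorner : (M2 N A U a₀ * M1 N A U a₀) (.inr ()) (.inr ()) = 1 - a₀ ⬝ᵥ star a₀ := by
    rw [hM₂M₁]; rfl
  rw [exists_ne_zero_smul_eq_iff_eq (.inr ()) (.inr ()) (by rw [hcorner, hM₁M₂]; rfl)
    (hcorner ▸ one_sub_dotProduct_star_ne_zero ha₀), hM₁M₂, hM₂M₁, fromBlocks_inj,
    replicateCol_inj, replicateRow_inj]
  constructor
  · rintro ⟨h₁₁, h₁₂, -, -⟩
    exact ⟨h₁₁.symm, by rw [← neg_sub a₀, h₁₂, neg_sub]⟩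
  · rintro ⟨h₁₁, h₁₂⟩
    exact ⟨h₁₁.symm, by rw [← neg_sub (_ *ᵥ a₀), h₁₂, neg_sub],
      row_block_eq_of_col_block_eq a₀ hA hUsymm hUunit h₁₂, rfl⟩
end
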